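/- The map T defined by (Tα)ᵏ = D⁽ⁿ⁻ᵏ⁺¹⁾(αᵏ, αᵏ⁺¹, …, αⁿ) sends n-tuples of configurations (satisfying the finiteness of intermediate queue lengths) into the space of ordered configurations: (Tα)ᵏ(j) ≤ (Tα)ᵏ⁺¹(j) for all k = 1,…,n-1 and all j ∈ ℤ. -/

import Mathlib

open scoped ENNReal
open Classical

noncomputable section

/-- Stationary queue length: `Z(j) = sup_{r ≤ j} (∑_{i=r}^j (a i - s i))⁺`, valued in `ℕ∞`. -/
def Zq (a s : ℤ → ℤ) (j : ℤ) : ℕ∞ :=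
  ⨆ r ∈ Set.Iic j, ((∑ i ∈ Finset.Icc r j, (a i - s i)).toNat : ℕ∞)

/-- Departure process: `D(a,s)(j) = 1` iff `s j = 1` and `Z(j-1) + a j > 0`. -/
def Dq (a s : ℤ → ℤ) (j : ℤ) : ℤ :=
  if s j = 1 ∧ 0 < Zq a s (j - 1) + ((a j).toNat : ℕ∞) then 1 else 0

/-- Iterated departures: `Dfrom α r m` is `D^{(m+1)}(α r, α (r+1), …, α (r+m))`. -/
def Dfrom (α : ℕ → ℤ → ℤ) (r : ℕ) : ℕ → ℤ → ℤ
  | 0 => α r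
  | m + 1 => Dq (Dfrom α r m) (α (r + m + 1))

end

lemma Zq_mono {a a' s : ℤ → ℤ} (h : ∀ i, a i ≤ a' i) (j : ℤ) :
    Zq a s j ≤ Zq a' s j := by
  apply iSup_mono; intro r
  apply iSup_mono; intro _
  have hs : (∑ i ∈ Finset.Icc r j, (a i - s i)) ≤ ∑ i ∈ Finset.Icc r j, (a' i - s i) :=
    Finset.sum_le_sum fun i _ => by have := h i; omega
  exact_mod_cast Int.toNat_le_toNat hs

lemma Dq_nonneg (a s : ℤ → ℤ) (j : ℤ) : 0 ≤ Dq a s j := by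
  unfold Dq; split <;> omega

lemma Dq_mono {a a' : ℤ → ℤ} (h : ∀ i, a i ≤ a' i) (s : ℤ → ℤ) (j : ℤ) :
    Dq a s j ≤ Dq a' s j := by
  unfold Dq
  by_cases hc : s j = 1 ∧ 0 < Zq a s (j - 1) + ((a j).toNat : ℕ∞)
  · have hc' : s j = 1 ∧ 0 < Zq a' s (j - 1) + ((a' j).toNat : ℕ∞) := by
      refine ⟨hc.1, lt_of_lt_of_le hc.2 (add_le_add (Zq_mono h _) ?_)⟩
      exact_mod_cast Int.toNat_le_toNat (h j)
    rw [if_pos hc, if_pos hc']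
  · rw [if_neg hc]; split <;> omega

lemma Dq_le_s {a s : ℤ → ℤ} (hs : ∀ i, s i = 0 ∨ s i = 1) (j : ℤ) :
    Dq a s j ≤ s j := by
  unfold Dq
  split
  · next hc => omega
  · rcases hs j with h | h <;> omega

lemma Dfrom_step_le (α : ℕ → ℤ → ℤ) (n : ℕ)
    (h01 : ∀ k, k < n → ∀ i, α k i = 0 ∨ α k i = 1) :
    ∀ m r : ℕ, r + m + 1 < n → ∀ j : ℤ,
      Dfrom α r (m + 1) j ≤ Dfrom α (r + 1) m j := by
  intro m
  induction m with
  | zero =>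
    intro r hr j
    show Dq (Dfrom α r 0) (α (r + 0 + 1)) j ≤ α (r + 1) j
    have : r + 0 + 1 = r + 1 := by omega
    rw [this]
    exact Dq_le_s (h01 (r + 1) (by omega)) j
  | succ m ih =>
    intro r hr j
    show Dq (Dfrom α r (m + 1)) (α (r + (m + 1) + 1)) j ≤
        Dq (Dfrom α (r + 1) m) (α (r + 1 + m + 1)) j
    have harg : r + (m + 1) + 1 = r + 1 + m + 1 := by omega
    rw [harg]
    exact Dq_mono (fun i => ih r (by omega) i) _ j

/-- The tandem-queue map `T`, with `(Tα)ᵏ = D⁽ⁿ⁻ᵏ⁺¹⁾(αᵏ,…,αⁿ)`, produces an ordered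
configuration: `(Tα)ᵏ ≤ (Tα)ᵏ⁺¹` pointwise.  Lines are indexed `0,…,n-1`, so that
`(Tα)ᵏ = Dfrom α (k-1) (n-k)` becomes `fun j => Dfrom α k (n-1-k) j` for `k = 0,…,n-1`. -/
theorem T_map_ordered (n : ℕ) (hn : 1 ≤ n) (α : ℕ → ℤ → ℤ)
    (h01 : ∀ k, k < n → ∀ i, α k i = 0 ∨ α k i = 1)
    (hfin : ∀ r m : ℕ, r + m + 1 < n → ∀ j : ℤ, Zq (Dfrom α r m) (α (r + m + 1)) j ≠ ⊤) :
    ∀ k : ℕ, k + 1 < n → ∀ j : ℤ,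
      Dfrom α k (n - 1 - k) j ≤ Dfrom α (k + 1) (n - 1 - (k + 1)) j := by
  intro k hk j
  have h1 : n - 1 - k = (n - 1 - (k + 1)) + 1 := by omega
  rw [h1]
  exact Dfrom_step_le α n h01 (n - 1 - (k + 1)) k (by omega) j
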